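/- arXiv:0802.1571 — 3 statements merged into one kernel-verified Lean document; each statement's English description precedes it below -/
import Mathlib

section
/- Let n ≥ 1 and let X be the full n-simplex, i.e., the simplicial complex consisting of all nonempty subsets of an (n+1)-element vertex set. For every 0 ≤ i ≤ n−1, the set of eigenvalues of the Laplace operator Δ acting on C^i(X) is exactly {0, n+1}. -/
open Finset

open scoped Classical

variable {V : Type*}

/-- A (finite) simplicial complex on the vertex type `V`: a collection of nonempty
finite sets of vertices (the simplices) closed under passing to nonempty subsets. -/
def IsComplex [DecidableEq V] (K : Finset (Finset V)) : Prop :=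
  (∀ s ∈ K, s.Nonempty) ∧ ∀ s ∈ K, ∀ t : Finset V, t ⊆ s → t.Nonempty → t ∈ K

/-- `K` is `n`-dimensional and satisfies condition `(1_X)`: every simplex has dimension
at most `n` and is a face of some `n`-dimensional simplex (one of cardinality `n+1`). -/
def IsPureDim [DecidableEq V] (K : Finset (Finset V)) (n : ℕ) : Prop :=
  (∀ s ∈ K, s.card ≤ n + 1) ∧ ∀ s ∈ K, ∃ t ∈ K, s ⊆ t ∧ t.card = n + 1

/-- `wt K n s` : the number `w(s)` of `n`-dimensional simplices of `K` containing `s`. -/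
noncomputable def wt [DecidableEq V] (K : Finset (Finset V)) (n : ℕ) (s : Finset V) : ℕ :=
  (K.filter fun t => s ⊆ t ∧ t.card = n + 1).card

/-- An `m`-tuple of vertices is allowed when its entries are distinct and form a simplex
of `K`; i.e. it is an oriented `(m-1)`-simplex of `K`. -/
def Allowed [DecidableEq V] [Fintype V] (K : Finset (Finset V)) {m : ℕ}
    (v : Fin m → V) : Prop :=
  Function.Injective v ∧ Finset.image v Finset.univ ∈ K

/-- `f` is an `(m-1)`-cochain on `K`: a real-valued alternating function on oriented
`(m-1)`-simplices of `K` (realized as a function on all `m`-tuples of vertices which is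
alternating and vanishes on tuples which are not oriented simplices of `K`). -/
def IsCochain [DecidableEq V] [Fintype V] (K : Finset (Finset V)) (m : ℕ)
    (f : (Fin m → V) → ℝ) : Prop :=
  (∀ (σ : Equiv.Perm (Fin m)) (v : Fin m → V),
      f (v ∘ σ) = ((Equiv.Perm.sign σ : ℤ) : ℝ) * f v) ∧
  ∀ v : Fin m → V, ¬ Allowed K v → f v = 0

/-- The inner product `(f,g) = ∑_s w(s)·f(s)·g(s)` on `(m-1)`-cochains, the sum being over
the unoriented `(m-1)`-simplices `s` of `K` (each with an arbitrarily chosen orientation);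
summing over all `m`-tuples counts each simplex `m!` times, whence the normalization. -/
noncomputable def innerC [DecidableEq V] [Fintype V] (K : Finset (Finset V)) (n m : ℕ)
    (f g : (Fin m → V) → ℝ) : ℝ :=
  (∑ v : Fin m → V, (wt K n (Finset.image v Finset.univ) : ℝ) * f v * g v) /
    (Nat.factorial m : ℝ)

/-- The coboundary `d : C^{m-1}(K) → C^m(K)`. -/
noncomputable def cobound [DecidableEq V] [Fintype V] (K : Finset (Finset V)) {m : ℕ}
    (f : (Fin m → V) → ℝ) : (Fin (m + 1) → V) → ℝ :=
  fun v => if Allowed K v then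
    ∑ j : Fin (m + 1), (-1 : ℝ) ^ (j : ℕ) * f (v ∘ Fin.succAbove j)
  else 0

/-- The operator `δ : C^m(K) → C^{m-1}(K)`,
`(δf)(s) = ∑_x (w([x,s])/w(s))·f([x,s])`, the sum being over the vertices `x`
such that `[x,s]` is an oriented simplex of `K`. -/
noncomputable def codiff [DecidableEq V] [Fintype V] (K : Finset (Finset V)) (n : ℕ) {m : ℕ}
    (f : (Fin (m + 1) → V) → ℝ) : (Fin m → V) → ℝ :=
  fun s => ∑ x : V,
    if Allowed K (Fin.cons x s) then
      ((wt K n (Finset.image (Fin.cons x s) Finset.univ) : ℝ) /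
          (wt K n (Finset.image s Finset.univ) : ℝ)) * f (Fin.cons x s)
    else 0

/-- The Laplace operator `Δ = δ ∘ d` on `(m-1)`-cochains. -/
noncomputable def lap [DecidableEq V] [Fintype V] (K : Finset (Finset V)) (n : ℕ) {m : ℕ}
    (f : (Fin m → V) → ℝ) : (Fin m → V) → ℝ :=
  codiff K n (cobound K f)

/-- `ρ_v : C^{m-1}(K) → C^{m-1}(K)`: `(ρ_v f)(s) = f(s)` if `v` is a vertex of `s`,
and `0` otherwise. -/
noncomputable def rho [DecidableEq V] {m : ℕ} (v : V) (f : (Fin m → V) → ℝ) :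
    (Fin m → V) → ℝ :=
  fun s => if ∃ j, s j = v then f s else 0

/-- The vertices of `K`. -/
noncomputable def verts [DecidableEq V] [Fintype V] (K : Finset (Finset V)) : Finset V :=
  Finset.univ.filter fun v => {v} ∈ K

/-- The link `Lk(v)` of a vertex `v`: all simplices `s` of `K` with `v ∉ s` and
`s ∪ {v} ∈ K`. -/
noncomputable def linkK [DecidableEq V] (K : Finset (Finset V)) (v : V) :
    Finset (Finset V) :=
  K.filter fun s => v ∉ s ∧ insert v s ∈ K

/-- `τ_v : C^{m}(K) → C^{m-1}(Lk(v))`: `(τ_v f)(s) = f([v,s])` for `s` an oriented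
simplex of the link `Lk(v)`. -/
noncomputable def tau [DecidableEq V] [Fintype V] (K : Finset (Finset V)) (v : V) {m : ℕ}
    (f : (Fin (m + 1) → V) → ℝ) : (Fin m → V) → ℝ :=
  fun s => if Allowed (linkK K v) s then f (Fin.cons v s) else 0

/-- `c` is an eigenvalue of the Laplace operator acting on `(m-1)`-cochains of `K`. -/
def IsEigen [DecidableEq V] [Fintype V] (K : Finset (Finset V)) (n m : ℕ) (c : ℝ) : Prop :=
  ∃ f : (Fin m → V) → ℝ, f ≠ 0 ∧ IsCochain K m f ∧ lap K n f = c • f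

/-!
On the full simplex every weight `w(s)` is `1`, so on tuples with distinct entries `d` is the
alternating face sum and `δ` is the sum over all ways of prepending a vertex. For these two
operators on arbitrary functions of tuples, `δ d g (s) = ∑ₓ d g (x :: s)`: deleting the
prepended `x` returns `g s` once for each of the `n + 1` vertices, and the remaining terms are
`-(d δ g)(s)`. Since the face sum of a cochain vanishes on `x :: s` when `x` already occurs in
`s`, this gives `dδ + δd = n + 1` on cochains, hence, with `d ∘ d = 0`, `Δ² = (n + 1) Δ`: every
eigenvalue is `0` or `n + 1`. Both occur: for the elementary cochain `g` of an oriented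
`i`-simplex `u` one computes `Δg(u) = n - i`, strictly between `0` and `n + 1`, so `Δg` is an
eigenvector for `n + 1` and `dδg = (n + 1) g - Δg` one for `0`.
-/

theorem Fin.removeNth_succ_cons {α : Type*} {m : ℕ} (x : α) (s : Fin (m + 1) → α)
    (k : Fin (m + 1)) :
    k.succ.removeNth (Fin.cons x s : Fin (m + 2) → α) = Fin.cons x (k.removeNth s) := by
  funext l
  cases l using Fin.cases <;> simp [Fin.removeNth, Fin.succ_succAbove_succ]

theorem Fin.cons_comp_decomposeFin_symm_zero {α : Type*} {m : ℕ} (x : α) (s : Fin m → α)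
    (σ : Equiv.Perm (Fin m)) :
    (Fin.cons x s : Fin (m + 1) → α) ∘ Equiv.Perm.decomposeFin.symm (0, σ) =
      Fin.cons x (s ∘ σ) := by
  funext l
  cases l using Fin.cases <;> simp

section FaceSum

variable {R : Type*} [CommRing R]

def faceSum {m : ℕ} (g : (Fin m → V) → R) (v : Fin (m + 1) → V) : R :=
  ∑ j : Fin (m + 1), (-1) ^ (j : ℕ) * g (j.removeNth v)

def vertexSum [Fintype V] {m : ℕ} (g : (Fin (m + 1) → V) → R) (s : Fin m → V) : R :=
  ∑ x, g (Fin.cons x s)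

/-- The terms `(j, k)` and `(j.succAbove k, k.predAbove j)` delete the same two entries and carry
opposite signs. -/
theorem faceSum_faceSum {m : ℕ} (g : (Fin m → V) → R) : faceSum (faceSum g) = 0 := by
  funext v
  simp only [faceSum, Finset.mul_sum, ← Fintype.sum_prod_type', Pi.zero_apply]
  refine Finset.sum_ninvolution (fun p => (p.1.succAbove p.2, p.2.predAbove p.1))
    (fun p => ?_) (fun p _ => Prod.ext_iff.not.2 fun h => Fin.succAbove_ne _ _ h.1)
    (fun _ => Finset.mem_univ _)
    (fun p => Prod.ext (Fin.succAbove_succAbove_predAbove _ _)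
      (Fin.predAbove_predAbove_succAbove _ _))
  rw [← Fin.removeNth_removeNth_eq_swap, ← mul_assoc, ← mul_assoc, ← pow_add, ← pow_add,
    Fin.neg_one_pow_succAbove_add_predAbove]
  ring

theorem faceSum_cons {m : ℕ} (g : (Fin (m + 1) → V) → R) (x : V) (s : Fin (m + 1) → V) :
    faceSum g (Fin.cons x s) =
      g s - ∑ k : Fin (m + 1), (-1) ^ (k : ℕ) * g (Fin.cons x (k.removeNth s)) := by
  simp only [faceSum, Fin.sum_univ_succ, Fin.removeNth_zero, Fin.tail_cons, Fin.val_zero, pow_zero,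
    one_mul, Fin.removeNth_succ_cons, Fin.val_succ, pow_succ, mul_neg_one, neg_mul,
    Finset.sum_neg_distrib, sub_eq_add_neg]

theorem faceSum_vertexSum_add_vertexSum_faceSum [Fintype V] {m : ℕ}
    (g : (Fin (m + 1) → V) → R) :
    faceSum (vertexSum g) + vertexSum (faceSum g) = (Fintype.card V : R) • g := by
  funext s
  simp only [Pi.add_apply, Pi.smul_apply, vertexSum, faceSum_cons, Finset.sum_sub_distrib,
    Finset.sum_const, Finset.card_univ, nsmul_eq_mul, smul_eq_mul]
  rw [faceSum, Finset.sum_comm (s := Finset.univ (α := V))]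
  simp only [vertexSum, Finset.mul_sum]
  ring

end FaceSum

section Linear

variable [DecidableEq V] [Fintype V] (K : Finset (Finset V))

theorem cobound_sub {m : ℕ} (f g : (Fin m → V) → ℝ) :
    cobound K (f - g) = cobound K f - cobound K g := by
  funext v
  simp only [cobound, Pi.sub_apply, mul_sub, Finset.sum_sub_distrib]
  split_ifs <;> simp

theorem cobound_smul {m : ℕ} (a : ℝ) (f : (Fin m → V) → ℝ) :
    cobound K (a • f) = a • cobound K f := by
  funext v
  simp only [cobound, Pi.smul_apply, smul_eq_mul]
  split_ifs
  · simp only [Finset.mul_sum, mul_left_comm a]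
  · simp

theorem codiff_smul (n : ℕ) {m : ℕ} (a : ℝ) (f : (Fin (m + 1) → V) → ℝ) :
    codiff K n (a • f) = a • codiff K n f := by
  funext s
  simp only [codiff, Pi.smul_apply, smul_eq_mul, Finset.mul_sum]
  refine Finset.sum_congr rfl fun x _ => ?_
  split_ifs <;> ring

theorem codiff_zero (n : ℕ) {m : ℕ} : codiff K n (0 : (Fin (m + 1) → V) → ℝ) = 0 := by
  funext s
  simp [codiff]

theorem lap_smul (n : ℕ) {m : ℕ} (a : ℝ) (f : (Fin m → V) → ℝ) :
    lap K n (a • f) = a • lap K n f := by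
  rw [lap, cobound_smul, codiff_smul]
  rfl

variable {K}

theorem IsCochain.sub {m : ℕ} {f g : (Fin m → V) → ℝ} (hf : IsCochain K m f)
    (hg : IsCochain K m g) : IsCochain K m (f - g) :=
  ⟨fun σ v => by simp [hf.1 σ v, hg.1 σ v, mul_sub],
    fun v hv => by simp [hf.2 v hv, hg.2 v hv]⟩

theorem IsCochain.smul {m : ℕ} {f : (Fin m → V) → ℝ} (a : ℝ) (hf : IsCochain K m f) :
    IsCochain K m (a • f) :=
  ⟨fun σ v => by simp [hf.1 σ v, mul_left_comm a], fun v hv => by simp [hf.2 v hv]⟩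

end Linear

def fullSimplex (V : Type*) [Fintype V] : Finset (Finset V) :=
  Finset.univ.filter fun s : Finset V => s.Nonempty

section FullSimplex

variable [Fintype V] [DecidableEq V]

theorem allowed_fullSimplex_iff {m : ℕ} (v : Fin (m + 1) → V) :
    Allowed (fullSimplex V) v ↔ Function.Injective v := by
  simp [Allowed, fullSimplex, Finset.univ_nonempty]

theorem wt_fullSimplex {n : ℕ} (hcard : Fintype.card V = n + 1) (s : Finset V) :
    wt (fullSimplex V) n s = 1 := by
  have : Nonempty V := Fintype.card_pos_iff.1 (by omega)
  rw [wt, Finset.card_eq_one]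
  refine ⟨Finset.univ, Finset.ext fun t => ?_⟩
  simp only [fullSimplex, Finset.mem_filter, Finset.mem_univ, true_and, Finset.mem_singleton,
    ← hcard, Finset.card_eq_iff_eq_univ]
  constructor
  · exact fun h => h.2.2
  · rintro rfl
    exact ⟨Finset.univ_nonempty, Finset.subset_univ s, rfl⟩

theorem cobound_fullSimplex_apply {m : ℕ} (f : (Fin m → V) → ℝ) (v : Fin (m + 1) → V) :
    cobound (fullSimplex V) f v = if Function.Injective v then faceSum f v else 0 := by
  simp only [cobound, allowed_fullSimplex_iff]
  rfl

theorem IsCochain.apply_eq_zero {m : ℕ} {f : (Fin (m + 1) → V) → ℝ}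
    (hf : IsCochain (fullSimplex V) (m + 1) f) {v : Fin (m + 1) → V}
    (hv : ¬ Function.Injective v) : f v = 0 :=
  hf.2 v (by rwa [allowed_fullSimplex_iff])

theorem codiff_fullSimplex_eq_vertexSum {n m : ℕ} (hcard : Fintype.card V = n + 1)
    {g : (Fin (m + 1) → V) → ℝ} (hg : ∀ v, ¬ Function.Injective v → g v = 0) :
    codiff (fullSimplex V) n g = vertexSum g := by
  funext s
  simp only [codiff, vertexSum, allowed_fullSimplex_iff, wt_fullSimplex hcard, div_one,
    Nat.cast_one, one_mul]
  exact Finset.sum_congr rfl fun x _ => ite_eq_left_iff.2 fun hx => (hg _ hx).symm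

/-- Only the face deleting position `i` survives, and `s` is `Fin.cons (s i) (i.removeNth s)`
permuted by `i.cycleRange`, of sign `(-1) ^ i`. -/
theorem faceSum_cons_apply_self {m : ℕ} {g : (Fin (m + 1) → V) → ℝ}
    (hg : IsCochain (fullSimplex V) (m + 1) g) (s : Fin (m + 1) → V) (i : Fin (m + 1)) :
    faceSum g (Fin.cons (s i) s) = 0 := by
  rw [faceSum_cons, Fintype.sum_eq_single i]
  · have h := hg.1 i.cycleRange (Fin.cons (s i) (i.removeNth s))
    rw [Fin.cons_comp_cycleRange, Fin.insertNth_self_removeNth, Fin.sign_cycleRange] at h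
    push_cast at h
    rw [h, sub_self]
  · intro k hk
    obtain ⟨l, hl⟩ := Fin.exists_succAbove_eq (Ne.symm hk)
    refine mul_eq_zero_of_right _ (hg.apply_eq_zero fun hinj => Fin.succ_ne_zero l ?_)
    exact (hinj (a₁ := 0) (a₂ := l.succ) (by simp [Fin.removeNth, hl])).symm

theorem cobound_codiff_add_codiff_cobound {n m : ℕ} (hcard : Fintype.card V = n + 1)
    {g : (Fin (m + 1) → V) → ℝ} (hg : IsCochain (fullSimplex V) (m + 1) g) :
    cobound (fullSimplex V) (codiff (fullSimplex V) n g) +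
        codiff (fullSimplex V) n (cobound (fullSimplex V) g) = ((n : ℝ) + 1) • g := by
  have hdg : ∀ v, ¬ Function.Injective v → cobound (fullSimplex V) g v = 0 := fun v hv => by
    simp [cobound_fullSimplex_apply, hv]
  rw [codiff_fullSimplex_eq_vertexSum hcard fun v hv => hg.apply_eq_zero hv,
    codiff_fullSimplex_eq_vertexSum hcard hdg]
  funext s
  by_cases hs : Function.Injective s
  · have hvs : vertexSum (cobound (fullSimplex V) g) s = vertexSum (faceSum g) s := by
      refine Finset.sum_congr rfl fun x _ => ?_
      rw [cobound_fullSimplex_apply, ite_eq_left_iff]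
      intro hx
      obtain ⟨i, rfl⟩ : x ∈ Set.range s := by simpa [Fin.cons_injective_iff, hs] using hx
      exact (faceSum_cons_apply_self hg s i).symm
    have h := congrFun (faceSum_vertexSum_add_vertexSum_faceSum g) s
    simp only [Pi.add_apply, Pi.smul_apply, hcard, Nat.cast_add, Nat.cast_one] at h
    simp only [Pi.add_apply, Pi.smul_apply, cobound_fullSimplex_apply, if_pos hs, hvs, h]
  · simp [cobound_fullSimplex_apply, hs, vertexSum, hg.apply_eq_zero hs, Fin.cons_injective_iff]

theorem cobound_cobound_fullSimplex {m : ℕ} (f : (Fin m → V) → ℝ) :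
    cobound (fullSimplex V) (cobound (fullSimplex V) f) = 0 := by
  funext v
  rw [cobound_fullSimplex_apply, Pi.zero_apply, ite_eq_right_iff]
  intro hv
  calc faceSum (cobound (fullSimplex V) f) v = faceSum (faceSum f) v :=
        Finset.sum_congr rfl fun j _ => by
          have hj : Function.Injective (j.removeNth v) := hv.comp Fin.succAbove_right_injective
          rw [cobound_fullSimplex_apply, if_pos hj]
    _ = 0 := by rw [faceSum_faceSum, Pi.zero_apply]

theorem IsCochain.codiff_fullSimplex {n m : ℕ} (hcard : Fintype.card V = n + 1)
    {g : (Fin (m + 2) → V) → ℝ} (hg : IsCochain (fullSimplex V) (m + 2) g) :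
    IsCochain (fullSimplex V) (m + 1) (codiff (fullSimplex V) n g) := by
  rw [codiff_fullSimplex_eq_vertexSum hcard fun v hv => hg.apply_eq_zero hv]
  refine ⟨fun σ s => ?_, fun s hs => ?_⟩
  · simp only [vertexSum, Finset.mul_sum]
    refine Finset.sum_congr rfl fun x _ => ?_
    have h := hg.1 (Equiv.Perm.decomposeFin.symm (0, σ)) (Fin.cons x s)
    rwa [Equiv.Perm.decomposeFin.symm_sign, if_pos rfl, one_mul,
      Fin.cons_comp_decomposeFin_symm_zero] at h
  · rw [allowed_fullSimplex_iff] at hs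
    exact Finset.sum_eq_zero fun x _ =>
      hg.apply_eq_zero fun h => hs (Fin.cons_injective_iff.1 h).2

theorem lap_lap_fullSimplex {n m : ℕ} (hcard : Fintype.card V = n + 1)
    {f : (Fin (m + 1) → V) → ℝ} (hf : IsCochain (fullSimplex V) (m + 1) f) :
    lap (fullSimplex V) n (lap (fullSimplex V) n f) =
      ((n : ℝ) + 1) • lap (fullSimplex V) n f := by
  have hlap : lap (fullSimplex V) n f =
      ((n : ℝ) + 1) • f - cobound (fullSimplex V) (codiff (fullSimplex V) n f) :=
    eq_sub_of_add_eq' (cobound_codiff_add_codiff_cobound hcard hf)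
  conv_lhs => rw [hlap, lap, cobound_sub, cobound_cobound_fullSimplex, sub_zero, cobound_smul,
    codiff_smul]
  rfl

end FullSimplex

section Cochains

variable [DecidableEq V]

/-- Determinants give alternating cochains for free, and Laplace expansion along the first column
computes their coboundary (`cobound_detCochain`). -/
def detCochain {m : ℕ} (A : V → Fin m → ℝ) (v : Fin m → V) : ℝ :=
  (Matrix.of fun a => A (v a)).det

def elementaryCochain {m : ℕ} (u : Fin m → V) : (Fin m → V) → ℝ :=
  detCochain fun x b => if x = u b then 1 else 0

theorem elementaryCochain_self {m : ℕ} {u : Fin m → V} (hu : Function.Injective u) :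
    elementaryCochain u u = 1 := by
  have h : (Matrix.of fun a b => if u a = u b then (1 : ℝ) else 0) = 1 := by
    ext a b
    simp [Matrix.one_apply, hu.eq_iff]
  rw [elementaryCochain, detCochain, h, Matrix.det_one]

theorem elementaryCochain_cons_of_notMem {m : ℕ} {u : Fin (m + 1) → V} {x : V}
    (hx : x ∉ Set.range u) (t : Fin m → V) : elementaryCochain u (Fin.cons x t) = 0 :=
  Matrix.det_eq_zero_of_row_eq_zero 0 fun b => by
    simpa using fun h => hx ⟨b, h.symm⟩

variable [Fintype V]

theorem isCochain_detCochain {m : ℕ} (A : V → Fin (m + 1) → ℝ) :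
    IsCochain (fullSimplex V) (m + 1) (detCochain A) := by
  refine ⟨fun σ v => Matrix.det_permute σ (Matrix.of fun a => A (v a)), fun v hv => ?_⟩
  rw [allowed_fullSimplex_iff, Function.Injective] at hv
  push Not at hv
  obtain ⟨a, b, hab, hne⟩ := hv
  exact Matrix.det_zero_of_row_eq hne (funext fun k => by simp [hab])

theorem cobound_detCochain {m : ℕ} (A : V → Fin m → ℝ) :
    cobound (fullSimplex V) (detCochain A) = detCochain fun x => Fin.cons 1 (A x) := by
  funext v
  rw [cobound_fullSimplex_apply]
  split_ifs with hv
  · rw [detCochain, Matrix.det_succ_column_zero]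
    simp [faceSum, detCochain, Fin.removeNth, Matrix.submatrix]
  · exact ((isCochain_detCochain _).apply_eq_zero hv).symm

theorem isCochain_lap_elementaryCochain {n m : ℕ} (hcard : Fintype.card V = n + 1)
    (u : Fin (m + 1) → V) :
    IsCochain (fullSimplex V) (m + 1) (lap (fullSimplex V) n (elementaryCochain u)) := by
  rw [lap, elementaryCochain, cobound_detCochain]
  exact (isCochain_detCochain _).codiff_fullSimplex hcard

theorem lap_elementaryCochain_apply_self {n m : ℕ} (hcard : Fintype.card V = n + 1)
    {u : Fin (m + 1) → V} (hu : Function.Injective u) :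
    lap (fullSimplex V) n (elementaryCochain u) u = n - m := by
  have hterm : ∀ x, cobound (fullSimplex V) (elementaryCochain u) (Fin.cons x u) =
      if x ∉ Set.range u then 1 else 0 := by
    intro x
    by_cases hx : x ∈ Set.range u
    · simp [cobound_fullSimplex_apply, Fin.cons_injective_iff, hx]
    · simp [cobound_fullSimplex_apply, Fin.cons_injective_iff, hx, hu, faceSum_cons,
        elementaryCochain_self hu, elementaryCochain_cons_of_notMem hx]
  rw [lap, codiff_fullSimplex_eq_vertexSum hcard fun v hv => by
    simp [cobound_fullSimplex_apply, hv], vertexSum]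
  simp only [hterm, Finset.sum_boole]
  have hcompl : (Finset.univ.filter fun x => x ∉ Set.range u) = (Finset.univ.image u)ᶜ := by
    ext; simp
  have hm : m + 1 ≤ n + 1 := by simpa [hcard] using Fintype.card_le_of_injective u hu
  rw [hcompl, Finset.card_compl, Finset.card_image_of_injective _ hu, Finset.card_univ,
    Fintype.card_fin, hcard, Nat.cast_sub hm]
  push_cast
  ring

end Cochains

section Eigenvalues

variable [Fintype V] [DecidableEq V]

theorem IsEigen.eq_zero_or_eq_of_fullSimplex {n m : ℕ} {c : ℝ} (hcard : Fintype.card V = n + 1)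
    (h : IsEigen (fullSimplex V) n (m + 1) c) : c = 0 ∨ c = (n : ℝ) + 1 := by
  obtain ⟨f, hf0, hf, hfc⟩ := h
  have h := lap_lap_fullSimplex hcard hf
  rw [hfc, lap_smul, hfc, smul_smul, smul_smul, ← sub_eq_zero, ← sub_smul] at h
  have hc : c * (c - ((n : ℝ) + 1)) = 0 := by
    linear_combination (smul_eq_zero.1 h).resolve_right hf0
  exact (mul_eq_zero.1 hc).imp_right sub_eq_zero.1

theorem isEigen_fullSimplex_zero {n m : ℕ} (hcard : Fintype.card V = n + 1) (hm : m ≤ n) :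
    IsEigen (fullSimplex V) n (m + 1) 0 := by
  obtain ⟨u⟩ : Nonempty (Fin (m + 1) ↪ V) :=
    Function.Embedding.nonempty_of_card_le (by simp [hcard, hm])
  have hg : IsCochain (fullSimplex V) (m + 1) (elementaryCochain u) := isCochain_detCochain _
  have hdδ : cobound (fullSimplex V) (codiff (fullSimplex V) n (elementaryCochain u)) =
      ((n : ℝ) + 1) • elementaryCochain u - lap (fullSimplex V) n (elementaryCochain u) :=
    eq_sub_of_add_eq (cobound_codiff_add_codiff_cobound hcard hg)
  refine ⟨cobound (fullSimplex V) (codiff (fullSimplex V) n (elementaryCochain u)),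
    fun h => ?_, ?_, ?_⟩
  · have := congrFun hdδ u
    simp [h, lap_elementaryCochain_apply_self hcard u.injective,
      elementaryCochain_self u.injective] at this
    linarith
  · rw [hdδ]
    exact (hg.smul _).sub (isCochain_lap_elementaryCochain hcard u)
  · rw [zero_smul, lap, cobound_cobound_fullSimplex, codiff_zero]

theorem isEigen_fullSimplex_card {n m : ℕ} (hcard : Fintype.card V = n + 1) (hm : m < n) :
    IsEigen (fullSimplex V) n (m + 1) ((n : ℝ) + 1) := by
  obtain ⟨u⟩ : Nonempty (Fin (m + 1) ↪ V) :=
    Function.Embedding.nonempty_of_card_le (by simp [hcard]; omega)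
  refine ⟨lap (fullSimplex V) n (elementaryCochain u), fun h => ?_,
    isCochain_lap_elementaryCochain hcard u, lap_lap_fullSimplex hcard (isCochain_detCochain _)⟩
  have := congrFun h u
  rw [lap_elementaryCochain_apply_self hcard u.injective, Pi.zero_apply, sub_eq_zero] at this
  exact hm.ne (by exact_mod_cast this.symm)

end Eigenvalues

theorem full_simplex_eigenvalues_general
    [Fintype V] [DecidableEq V] (n : ℕ)
    (hcard : Fintype.card V = n + 1)
    (i : ℕ) (hi : i + 1 ≤ n) (c : ℝ) :
    IsEigen (Finset.univ.filter fun s : Finset V => s.Nonempty) n (i + 1) c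
      ↔ c = 0 ∨ c = (n : ℝ) + 1 := by
  refine ⟨IsEigen.eq_zero_or_eq_of_fullSimplex hcard, ?_⟩
  rintro (rfl | rfl)
  · exact isEigen_fullSimplex_zero hcard (by omega)
  · exact isEigen_fullSimplex_card hcard hi

/-- for the full `n`-simplex (`n ≥ 1`), i.e. the complex of all nonempty
subsets of an `(n+1)`-element vertex set, and any `0 ≤ i ≤ n-1`, the set of eigenvalues
of `Δ` on `C^i(X)` is exactly `{0, n+1}`. -/
theorem full_simplex_eigenvalues
    [Fintype V] [DecidableEq V] (n : ℕ) (hn : 1 ≤ n)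
    (hcard : Fintype.card V = n + 1)
    (i : ℕ) (hi : i + 1 ≤ n) (c : ℝ) :
    IsEigen (Finset.univ.filter fun s : Finset V => s.Nonempty) n (i + 1) c
      ↔ c = 0 ∨ c = (n : ℝ) + 1 :=
  full_simplex_eigenvalues_general n hcard i hi c
end

section
/- Let X be a finite n-dimensional simplicial complex satisfying condition (1_X), equipped with a type function t : V → {0,1,…,n} such that the vertices of every simplex of X have pairwise distinct types (equivalently, every n-simplex has exactly one vertex of each type). Let R ∈ ℝ, let f ∈ C^0(X) satisfy Δf = c·f for some real c, and for each α ∈ {0,…,n} define f_α ∈ C^0(X) by f_α(v) = R·f(v) if t(v) = α and f_α(v) = f(v) otherwise. Then Σ_{α=0}^{n} (Δ f_α, f_α) = [(n−c)·(R−1)² + c·(R² + n)]·(f, f). -/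
open Finset

open scoped Classical

variable {V : Type*}

/-!
For `0`-cochains, `(Δg, h) = n·(g, h) − E(g, h)`, where `E` is the form of the weighted
adjacency matrix: the weights `w({x, v})` of the edges at `v` add up to `n·w(v)`, since each
`n`-simplex through `v` contains `n` of them. Scaling `f` by `R` on the vertices of type `α`
multiplies, after summing over `α`, the diagonal part `(f, f)` by `∑_α r_α(a)² = R² + n`
(with `r_α(a) = R` if `a = α` and `1` otherwise) and, because the two ends of an edge have
distinct types, the adjacency part by `∑_α r_α(a) r_α(b) = 2R + n − 1`.
Finally `Δf = c·f` gives `E(f, f) = (n − c)·(f, f)`, and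
`n(R² + n) − (2R + n − 1)(n − c) = (n − c)(R − 1)² + c(R² + n)`.
-/

lemma sum_ite_mul_self {ι : Type*} [Fintype ι] [DecidableEq ι] (R : ℝ) (a : ι) :
    ∑ α, (if a = α then R else 1) * (if a = α then R else 1) = R ^ 2 + (Fintype.card ι - 1) :=
  calc ∑ α, (if a = α then R else 1) * (if a = α then R else 1)
      = ∑ α, ((if a = α then R ^ 2 - 1 else 0) + 1) :=
        sum_congr rfl fun α _ => by split_ifs <;> ring
    _ = R ^ 2 + (Fintype.card ι - 1) := by
        rw [sum_add_distrib, sum_ite_eq, if_pos (mem_univ a), sum_const, card_univ, nsmul_one]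
        ring

lemma sum_ite_mul_ite_of_ne {ι : Type*} [Fintype ι] [DecidableEq ι] (R : ℝ) {a b : ι}
    (hab : a ≠ b) :
    ∑ α, (if a = α then R else 1) * (if b = α then R else 1) = 2 * R + (Fintype.card ι - 2) :=
  calc ∑ α, (if a = α then R else 1) * (if b = α then R else 1)
      = ∑ α, ((if a = α then R - 1 else 0) + (if b = α then R - 1 else 0) + 1) :=
        sum_congr rfl fun α _ => by
          split_ifs with ha hb <;> first | exact absurd (ha.trans hb.symm) hab | ring
    _ = 2 * R + (Fintype.card ι - 2) := by
        rw [sum_add_distrib, sum_add_distrib, sum_ite_eq, sum_ite_eq, if_pos (mem_univ a),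
          if_pos (mem_univ b), sum_const, card_univ, nsmul_one]
        ring

section Laplacian

variable [DecidableEq V] (K : Finset (Finset V)) (n : ℕ)

lemma image_fin_one (s : Fin 1 → V) : Finset.image s univ = {s 0} := by
  ext y; simp

lemma image_cons_fin_one (x : V) (s : Fin 1 → V) :
    Finset.image (Fin.cons x s : Fin 2 → V) univ = {x, s 0} := by
  ext y; simp [Fin.exists_fin_two, eq_comm]

lemma wt_eq_zero_of_notMem (hK : IsComplex K) {s : Finset V} (hs : s.Nonempty) (h : s ∉ K) :
    wt K n s = 0 := by
  rw [wt, card_eq_zero, filter_eq_empty_iff]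
  rintro T hT ⟨hsT, -⟩
  exact h (hK.2 T hT s hsT hs)

lemma wt_le_of_subset {s s' : Finset V} (h : s ⊆ s') : wt K n s' ≤ wt K n s :=
  card_le_card fun T hT => by
    simp only [mem_filter] at hT ⊢
    exact ⟨hT.1, h.trans hT.2.1, hT.2.2⟩

variable [Fintype V]

lemma allowed_cons_fin_one_iff (x : V) (s : Fin 1 → V) :
    Allowed K (Fin.cons x s) ↔ x ≠ s 0 ∧ ({x, s 0} : Finset V) ∈ K := by
  rw [Allowed, image_cons_fin_one, Fin.cons_injective_iff]
  simp [Fin.exists_fin_one, eq_comm, Function.injective_of_subsingleton s]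

lemma innerC_fin_one (g h : (Fin 1 → V) → ℝ) :
    innerC K n 1 g h = ∑ s : Fin 1 → V, (wt K n {s 0} : ℝ) * g s * h s := by
  simp [innerC]

lemma innerC_smul_left (c : ℝ) (g h : (Fin 1 → V) → ℝ) :
    innerC K n 1 (c • g) h = c * innerC K n 1 g h := by
  simp only [innerC_fin_one, mul_sum, Pi.smul_apply, smul_eq_mul]
  exact sum_congr rfl fun _ _ => by ring

noncomputable def edgeWt (x v : V) : ℝ :=
  if x ≠ v ∧ ({x, v} : Finset V) ∈ K then (wt K n {x, v} : ℝ) else 0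

noncomputable def edgeForm (g h : (Fin 1 → V) → ℝ) : ℝ :=
  ∑ s : Fin 1 → V, ∑ x : V, edgeWt K n x (s 0) * g (fun _ => x) * h s

lemma lap_fin_one_apply (g : (Fin 1 → V) → ℝ) (s : Fin 1 → V) :
    lap K n g s = ∑ x : V, if Allowed K (Fin.cons x s) then
      (wt K n {x, s 0} : ℝ) / (wt K n {s 0} : ℝ) * (g s - g (fun _ => x)) else 0 := by
  refine sum_congr rfl fun x _ => ?_
  split_ifs with hA
  · have h1 : (Fin.cons x s : Fin 2 → V) ∘ Fin.succAbove 1 = fun _ => x := by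
      funext i; rw [Subsingleton.elim i 0]; rfl
    simp [cobound, hA, image_cons_fin_one, Fin.sum_univ_two, h1, sub_eq_add_neg]
  · rfl

lemma innerC_lap_fin_one (g h : (Fin 1 → V) → ℝ) :
    innerC K n 1 (lap K n g) h
      = ∑ s : Fin 1 → V, ∑ x : V, edgeWt K n x (s 0) * (g s - g (fun _ => x)) * h s := by
  rw [innerC_fin_one]
  refine sum_congr rfl fun s _ => ?_
  rw [lap_fin_one_apply, mul_sum, sum_mul]
  refine sum_congr rfl fun x _ => ?_
  rw [edgeWt]
  split_ifs with hA hE hE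
  · rcases eq_or_ne (wt K n {s 0} : ℝ) 0 with hw | hw
    · -- division by `w(v) = 0` is harmless: then also `w({x, v}) = 0`
      have : wt K n {x, s 0} = 0 := by
        have := wt_le_of_subset K n (s := {s 0}) (s' := {x, s 0}) (by simp)
        exact_mod_cast Nat.le_zero.1 (this.trans_eq (by exact_mod_cast hw))
      simp [this, hw]
    · field_simp
  · exact absurd ((allowed_cons_fin_one_iff K x s).1 hA) hE
  · exact absurd ((allowed_cons_fin_one_iff K x s).2 hE) hA
  · simp

lemma sum_wt_pair (v : V) : ∑ x ∈ univ.erase v, wt K n {x, v} = n * wt K n {v} := by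
  simp only [wt, card_filter]
  rw [sum_comm, mul_sum]
  refine sum_congr rfl fun T _ => ?_
  by_cases hvT : v ∈ T ∧ T.card = n + 1
  · rw [if_pos (by simpa using hvT), ← card_filter]
    have hfilter : {x ∈ univ.erase v | {x, v} ⊆ T ∧ #T = n + 1} = T.erase v := by
      ext x
      simp [insert_subset_iff, hvT]
    rw [hfilter, card_erase_of_mem hvT.1, hvT.2, mul_one, Nat.add_sub_cancel]
  · rw [if_neg (by simpa using hvT), mul_zero]
    exact sum_eq_zero fun x _ => if_neg fun h => hvT ⟨h.1 (by simp), h.2⟩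

lemma sum_edgeWt (hK : IsComplex K) (v : V) :
    ∑ x, edgeWt K n x v = n * wt K n {v} := by
  have hwt : ∀ x, edgeWt K n x v = if x ≠ v then (wt K n {x, v} : ℝ) else 0 := by
    intro x
    by_cases hxv : x = v
    · simp [edgeWt, hxv]
    by_cases hE : ({x, v} : Finset V) ∈ K
    · simp [edgeWt, hxv, hE]
    · simp [edgeWt, hxv, hE, wt_eq_zero_of_notMem K n hK (insert_nonempty x {v}) hE]
  rw [sum_congr rfl fun x _ => hwt x, ← sum_filter, filter_ne', ← Nat.cast_sum, sum_wt_pair,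
    Nat.cast_mul]

lemma innerC_lap_eq_sub_edgeForm (hK : IsComplex K) (g h : (Fin 1 → V) → ℝ) :
    innerC K n 1 (lap K n g) h = n * innerC K n 1 g h - edgeForm K n g h := by
  rw [innerC_lap_fin_one, innerC_fin_one, edgeForm, mul_sum, ← sum_sub_distrib]
  refine sum_congr rfl fun s _ => ?_
  simp only [mul_sub, sub_mul, sum_sub_distrib, ← sum_mul, sum_edgeWt K n hK]
  ring

section TypeScale

variable {ι : Type*} [Fintype ι] [DecidableEq ι]

/-- The cochain `f_α` of the statement. -/
def typeScale (t : V → ι) (R : ℝ) (α : ι) (f : (Fin 1 → V) → ℝ) : (Fin 1 → V) → ℝ :=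
  fun s => if t (s 0) = α then R * f s else f s

omit [DecidableEq V] [Fintype V] [Fintype ι] in
lemma typeScale_apply (t : V → ι) (R : ℝ) (α : ι) (f : (Fin 1 → V) → ℝ) (s : Fin 1 → V) :
    typeScale t R α f s = (if t (s 0) = α then R else 1) * f s := by
  rw [typeScale, ite_mul, one_mul]

lemma sum_innerC_typeScale (t : V → ι) (R : ℝ) (f g : (Fin 1 → V) → ℝ) :
    ∑ α, innerC K n 1 (typeScale t R α f) (typeScale t R α g)
      = (R ^ 2 + (Fintype.card ι - 1)) * innerC K n 1 f g := by
  simp only [innerC_fin_one, typeScale_apply]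
  rw [sum_comm, mul_sum]
  refine sum_congr rfl fun s _ => ?_
  rw [← sum_ite_mul_self R (t (s 0)), sum_mul]
  exact sum_congr rfl fun α _ => by ring

lemma sum_edgeForm_typeScale {t : V → ι} (ht : ∀ s ∈ K, Set.InjOn t (s : Set V)) (R : ℝ)
    (f g : (Fin 1 → V) → ℝ) :
    ∑ α, edgeForm K n (typeScale t R α f) (typeScale t R α g)
      = (2 * R + (Fintype.card ι - 2)) * edgeForm K n f g := by
  simp only [edgeForm, typeScale_apply]
  rw [sum_comm, mul_sum]
  refine sum_congr rfl fun s _ => ?_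
  rw [sum_comm, mul_sum]
  refine sum_congr rfl fun x _ => ?_
  by_cases hE : x ≠ s 0 ∧ ({x, s 0} : Finset V) ∈ K
  · have hne : t x ≠ t (s 0) := fun h => hE.1 (ht _ hE.2 (by simp) (by simp) h)
    rw [← sum_ite_mul_ite_of_ne R hne, sum_mul]
    exact sum_congr rfl fun α _ => by ring
  · simp [edgeWt, hE]

end TypeScale

end Laplacian

theorem sum_over_types_identity_general
    [Fintype V] [DecidableEq V] (K : Finset (Finset V)) (n : ℕ)
    (hcplx : IsComplex K)
    (t : V → Fin (n + 1)) (ht : ∀ s ∈ K, Set.InjOn t (s : Set V))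
    (R c : ℝ) (f : (Fin 1 → V) → ℝ)
    (heig : lap K n f = c • f) :
    ∑ α : Fin (n + 1),
        innerC K n 1 (lap K n (fun s => if t (s 0) = α then R * f s else f s))
          (fun s => if t (s 0) = α then R * f s else f s)
      = (((n : ℝ) - c) * (R - 1) ^ 2 + c * (R ^ 2 + (n : ℝ))) * innerC K n 1 f f := by
  have hedgeForm : edgeForm K n f f = (n - c) * innerC K n 1 f f := by
    have := innerC_lap_eq_sub_edgeForm K n hcplx f f
    rw [heig, innerC_smul_left] at this
    linarith
  change ∑ α, innerC K n 1 (lap K n (typeScale t R α f)) (typeScale t R α f) = _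
  simp only [innerC_lap_eq_sub_edgeForm K n hcplx, sum_sub_distrib, ← mul_sum,
    sum_innerC_typeScale, sum_edgeForm_typeScale K n ht, hedgeForm, Fintype.card_fin]
  push_cast
  ring

/-- for a type function `t : V → {0,…,n}` (vertices of every simplex have
pairwise distinct types), `R ∈ ℝ`, and `f ∈ C^0(X)` with `Δf = c·f`, setting
`f_α(v) = R·f(v)` if `t(v) = α` and `f_α(v) = f(v)` otherwise, one has
`∑_α (Δf_α, f_α) = ((n-c)·(R-1)² + c·(R²+n))·(f,f)`. -/
theorem sum_over_types_identity
    [Fintype V] [DecidableEq V] (K : Finset (Finset V)) (n : ℕ)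
    (hcplx : IsComplex K) (hpure : IsPureDim K n)
    (t : V → Fin (n + 1)) (ht : ∀ s ∈ K, Set.InjOn t (s : Set V))
    (R c : ℝ) (f : (Fin 1 → V) → ℝ) (hf : IsCochain K 1 f)
    (heig : lap K n f = c • f) :
    ∑ α : Fin (n + 1),
        innerC K n 1 (lap K n (fun s => if t (s 0) = α then R * f s else f s))
          (fun s => if t (s 0) = α then R * f s else f s)
      = (((n : ℝ) - c) * (R - 1) ^ 2 + c * (R ^ 2 + (n : ℝ))) * innerC K n 1 f f :=
  sum_over_types_identity_general K n hcplx t ht R c f heig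
end

section
/- For every prime power q, every integer ℓ ≥ 1, and every 0 ≤ i ≤ ℓ−1, the number ℓ+1 is an eigenvalue of the Laplace operator Δ acting on C^i(𝔅_{ℓ,q}), i.e., there exists a nonzero f ∈ C^i(𝔅_{ℓ,q}) with Δf = (ℓ+1)·f. -/
open Finset

open scoped Classical

variable {V : Type*}

/-- The building `𝔅_{ℓ,q}` of `SL_{ℓ+2}(𝔽_q)` (with `q = |F|`): the flag complex whose
vertices are the nonzero proper `F`-linear subspaces of `F^{ℓ+2}` and whose simplices
are the nonempty finite sets of such subspaces which are totally ordered by inclusion. -/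
noncomputable def buildingK (F : Type*) [Field F] [Fintype F] (ℓ : ℕ)
    [Fintype (Submodule F (Fin (ℓ + 2) → F))]
    [DecidableEq (Submodule F (Fin (ℓ + 2) → F))] :
    Finset (Finset (Submodule F (Fin (ℓ + 2) → F))) :=
  Finset.univ.filter fun s =>
    s.Nonempty ∧ (∀ W ∈ s, W ≠ ⊥ ∧ W ≠ ⊤) ∧ ∀ W ∈ s, ∀ U ∈ s, W ≤ U ∨ U ≤ W

/-! The eigencochain depends on a flag only through its type, the sequence of dimensions of its
subspaces. Every chamber contains exactly one subspace of each dimension `1, …, ℓ + 1`, so in `Δ f`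
the weights `w` cancel and `Δ` becomes the operator `g ↦ ∑_{e ∉ c} (d g)(e, c)` on alternating
functions `g` of types. It acts as `ℓ + 1` on every such `g` with `∑_{e = 1}^{ℓ + 1} g(e, c') = 0`,
for instance on the determinant whose rows are all ones and the indicators of the dimensions
`c j` among `1, …, i + 2`; that determinant is `1` on the type `(2, …, i + 2)`. -/

open Function

def IsDownClosed (K : Finset (Finset V)) : Prop :=
  ∀ t ∈ K, ∀ s ⊆ t, s.Nonempty → s ∈ K

def IsBalancedColoring {α : Type*} [DecidableEq α] (K : Finset (Finset V)) (n : ℕ)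
    (τ : V → α) (C : Finset α) : Prop :=
  ∀ t ∈ K, t.card = n + 1 → Set.InjOn τ t ∧ t.image τ = C

section Complex

variable [DecidableEq V]

noncomputable def topSimplices (K : Finset (Finset V)) (n : ℕ) (S : Finset V) :
    Finset (Finset V) :=
  K.filter fun t => S ⊆ t ∧ t.card = n + 1

theorem wt_antitone (K : Finset (Finset V)) (n : ℕ) : Antitone (wt K n) := fun _ _ h =>
  card_le_card fun _ ht => by
    simp only [mem_filter] at ht ⊢
    exact ⟨ht.1, h.trans ht.2.1, ht.2.2⟩

theorem image_cons_univ {m : ℕ} (x : V) (s : Fin m → V) :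
    univ.image (Fin.cons x s : Fin (m + 1) → V) = insert x (univ.image s) := by
  ext y
  simp [Fin.exists_fin_succ, eq_comm]

theorem image_univ_comp_subset {ι κ : Type*} [Fintype ι] [Fintype κ] (v : κ → V) (g : ι → κ) :
    univ.image (v ∘ g) ⊆ univ.image v := by
  rw [image_comp]
  exact image_subset_image (subset_univ _)

theorem Allowed.comp [Fintype V] {K : Finset (Finset V)} (hK : IsDownClosed K) {m k : ℕ}
    [NeZero k] {v : Fin m → V} (hv : Allowed K v) {g : Fin k → Fin m} (hg : Injective g) :
    Allowed K (v ∘ g) :=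
  ⟨hv.1.comp hg, hK _ hv.2 _ (image_univ_comp_subset v g) (univ_nonempty.image _)⟩

theorem sum_sdiff_comp_of_isBalancedColoring {α : Type*} [DecidableEq α]
    {K : Finset (Finset V)} {n : ℕ} {τ : V → α} {C : Finset α}
    (hτ : IsBalancedColoring K n τ C) {S t : Finset V} (ht : t ∈ topSimplices K n S)
    (h : α → ℝ) : ∑ x ∈ t \ S, h (τ x) = ∑ e ∈ C \ S.image τ, h e := by
  obtain ⟨htK, hSt, htc⟩ := mem_filter.mp ht
  obtain ⟨hinj, himg⟩ := hτ t htK htc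
  rw [← himg, ← image_sdiff_of_injOn hinj hSt, sum_image (hinj.mono (by simp))]

theorem ite_allowed_wt_cons [Fintype V] {K : Finset (Finset V)} (hK : IsDownClosed K) (n : ℕ)
    {m : ℕ} {s : Fin m → V} (hs : Injective s) (x : V) :
    (if Allowed K (Fin.cons x s) then wt K n (univ.image (Fin.cons x s)) else 0) =
      ((topSimplices K n (univ.image s)).filter fun t => x ∈ t \ univ.image s).card := by
  split_ifs with hx
  · have hxs : x ∉ univ.image s := by
      rintro hxs
      obtain ⟨a, -, ha⟩ := mem_image.mp hxs
      exact Fin.succ_ne_zero a (hx.1 (by simpa using ha))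
    rw [wt, image_cons_univ]
    congr 1
    ext t
    simp only [topSimplices, mem_filter, insert_subset_iff, mem_sdiff]
    tauto
  · refine (card_eq_zero.mpr (filter_eq_empty_iff.mpr ?_)).symm
    intro t ht hxt
    obtain ⟨htK, hSt, -⟩ := mem_filter.mp ht
    obtain ⟨hxt, hxs⟩ := mem_sdiff.mp hxt
    refine hx ⟨Fin.cons_injective_iff.mpr ⟨fun ⟨a, ha⟩ => hxs ?_, hs⟩, ?_⟩
    · exact ha ▸ mem_image_of_mem s (mem_univ a)
    · rw [image_cons_univ]
      exact hK t htK _ (insert_subset hxt hSt) (insert_nonempty _ _)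

/-- Double counting: every `n`-simplex through `s` contributes each color missing from `s`
exactly once, so the weights `w` factor out. -/
theorem sum_wt_cons_mul [Fintype V] {α : Type*} [DecidableEq α] {K : Finset (Finset V)}
    {n : ℕ} {τ : V → α} {C : Finset α} (hK : IsDownClosed K)
    (hτ : IsBalancedColoring K n τ C) {m : ℕ} {s : Fin m → V} (hs : Injective s)
    (h : α → ℝ) :
    ∑ x, (if Allowed K (Fin.cons x s) then
        (wt K n (univ.image (Fin.cons x s)) : ℝ) * h (τ x) else 0) =
      wt K n (univ.image s) * ∑ e ∈ C \ univ.image (τ ∘ s), h e := by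
  set S := univ.image s
  calc ∑ x, (if Allowed K (Fin.cons x s) then
        (wt K n (univ.image (Fin.cons x s)) : ℝ) * h (τ x) else 0)
      = ∑ x, ∑ t ∈ topSimplices K n S, if x ∈ t \ S then h (τ x) else 0 := by
        refine sum_congr rfl fun x _ => ?_
        rw [← ite_zero_mul, ← Nat.cast_zero, ← Nat.cast_ite, ite_allowed_wt_cons hK n hs,
          card_filter, Nat.cast_sum, sum_mul]
        exact sum_congr rfl fun t _ => by split_ifs <;> simp
    _ = ∑ t ∈ topSimplices K n S, ∑ e ∈ C \ univ.image (τ ∘ s), h e := by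
        rw [sum_comm]
        refine sum_congr rfl fun t ht => ?_
        rw [← sum_filter, filter_univ_mem, image_comp,
          sum_sdiff_comp_of_isBalancedColoring hτ ht]
    _ = wt K n S * ∑ e ∈ C \ univ.image (τ ∘ s), h e := by
        rw [sum_const, nsmul_eq_mul]
        rfl

theorem IsBalancedColoring.injective_comp_of_wt_ne_zero [Fintype V]
    {α : Type*} [DecidableEq α] {K : Finset (Finset V)} {n : ℕ} {τ : V → α} {C : Finset α}
    (hτ : IsBalancedColoring K n τ C) {m : ℕ} {s : Fin m → V} (hs : Allowed K s)
    (hw : wt K n (univ.image s) ≠ 0) : Injective (τ ∘ s) ∧ univ.image (τ ∘ s) ⊆ C := by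
  obtain ⟨t, ht⟩ := card_pos.mp (Nat.pos_of_ne_zero hw)
  obtain ⟨htK, hst, htc⟩ := mem_filter.mp ht
  obtain ⟨hinj, himg⟩ := hτ t htK htc
  have hmem : ∀ a, s a ∈ t := fun a => hst (mem_image_of_mem s (mem_univ a))
  refine ⟨fun a b hab => hs.1 (hinj (hmem a) (hmem b) hab), ?_⟩
  rw [← himg, image_comp]
  exact image_subset_image hst

end Complex

section TypeCochain

variable {α : Type*}

def IsAlternating {m : ℕ} (g : (Fin m → α) → ℝ) : Prop :=
  ∀ (σ : Equiv.Perm (Fin m)) (c : Fin m → α), g (c ∘ σ) = ((Equiv.Perm.sign σ : ℤ) : ℝ) * g c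

variable [DecidableEq V] [Fintype V]

/-- Cut off on simplices lying in no `n`-simplex (there are none in a pure complex): there the
weight `w(s)` by which `δ` divides vanishes. -/
noncomputable def typeCochain (K : Finset (Finset V)) (n : ℕ) (τ : V → α) {m : ℕ}
    (g : (Fin m → α) → ℝ) : (Fin m → V) → ℝ :=
  fun v => if Allowed K v ∧ wt K n (univ.image v) ≠ 0 then g (τ ∘ v) else 0

noncomputable def typeLap [DecidableEq α] (C : Finset α) {m : ℕ} (g : (Fin (m + 1) → α) → ℝ) :
    (Fin (m + 1) → α) → ℝ :=
  fun c => ∑ e ∈ C \ univ.image c,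
    ∑ j : Fin (m + 2), (-1 : ℝ) ^ (j : ℕ) * g (Fin.cons e c ∘ Fin.succAbove j)

theorem typeCochain_isCochain (K : Finset (Finset V)) (n : ℕ) (τ : V → α) {m : ℕ}
    {g : (Fin m → α) → ℝ} (hg : IsAlternating g) : IsCochain K m (typeCochain K n τ g) := by
  refine ⟨fun σ v => ?_, fun v hv => if_neg fun h => hv h.1⟩
  have himage : univ.image (v ∘ σ) = univ.image v := by
    rw [image_comp, image_univ_equiv]
  have hallowed : Allowed K (v ∘ σ) ↔ Allowed K v := by
    rw [Allowed, Allowed, himage, σ.injective_comp]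
  simp only [typeCochain, himage, hallowed]
  split_ifs
  · exact hg σ (τ ∘ v)
  · rw [mul_zero]

theorem typeCochain_of_wt_ne_zero {K : Finset (Finset V)} {n : ℕ} (τ : V → α) {m : ℕ}
    (g : (Fin m → α) → ℝ) {v : Fin m → V} (hv : Allowed K v) (hw : wt K n (univ.image v) ≠ 0) :
    typeCochain K n τ g v = g (τ ∘ v) :=
  if_pos ⟨hv, hw⟩

theorem cobound_typeCochain {K : Finset (Finset V)} (hK : IsDownClosed K) {n : ℕ} (τ : V → α)
    {m : ℕ} (g : (Fin (m + 1) → α) → ℝ) {v : Fin (m + 2) → V} (hv : Allowed K v)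
    (hw : wt K n (univ.image v) ≠ 0) :
    cobound K (typeCochain K n τ g) v =
      ∑ j : Fin (m + 2), (-1 : ℝ) ^ (j : ℕ) * g ((τ ∘ v) ∘ Fin.succAbove j) := by
  refine (if_pos hv).trans (sum_congr rfl fun j _ => ?_)
  have hface : wt K n (univ.image (v ∘ Fin.succAbove j)) ≠ 0 :=
    ((Nat.pos_of_ne_zero hw).trans_le (wt_antitone K n (image_univ_comp_subset v _))).ne'
  rw [typeCochain_of_wt_ne_zero τ g (hv.comp hK Fin.succAbove_right_injective) hface]
  rfl

theorem lap_typeCochain [DecidableEq α] {K : Finset (Finset V)} {n : ℕ} {τ : V → α}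
    {C : Finset α} (hK : IsDownClosed K) (hτ : IsBalancedColoring K n τ C) {m : ℕ}
    (g : (Fin (m + 1) → α) → ℝ) :
    lap K n (typeCochain K n τ g) = typeCochain K n τ (typeLap C g) := by
  funext s
  set Φ : α → ℝ := fun e =>
    ∑ j : Fin (m + 2), (-1 : ℝ) ^ (j : ℕ) * g (Fin.cons e (τ ∘ s) ∘ Fin.succAbove j)
  by_cases hs : Allowed K s ∧ wt K n (univ.image s) ≠ 0
  · obtain ⟨hsK, hw⟩ := hs
    calc lap K n (typeCochain K n τ g) s
        = ∑ x, if Allowed K (Fin.cons x s) then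
            (wt K n (univ.image (Fin.cons x s)) : ℝ) / wt K n (univ.image s) * Φ (τ x)
          else 0 := by
          refine sum_congr rfl fun x _ => ?_
          split_ifs with hx
          · by_cases hwx : wt K n (univ.image (Fin.cons x s)) = 0
            · simp [hwx]
            · rw [cobound_typeCochain hK τ g hx hwx, Fin.comp_cons]
          · rfl
    _ = (∑ x, if Allowed K (Fin.cons x s) then
            (wt K n (univ.image (Fin.cons x s)) : ℝ) * Φ (τ x) else 0) / wt K n (univ.image s) := by
          rw [sum_div]
          refine sum_congr rfl fun x _ => ?_
          split_ifs
          · ring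
          · rw [zero_div]
    _ = typeCochain K n τ (typeLap C g) s := by
          rw [sum_wt_cons_mul hK hτ hsK.1, typeCochain_of_wt_ne_zero τ _ hsK hw]
          field_simp
          rfl
  · rw [typeCochain, if_neg hs]
    refine sum_eq_zero fun x _ => ite_eq_right_iff.mpr fun hx => ?_
    have hsK : Allowed K s := by
      simpa [Function.comp_def] using hx.comp hK (Fin.succ_injective (m + 1))
    have hwx : wt K n (univ.image (Fin.cons x s)) = 0 := by
      have hle := wt_antitone K n (image_cons_univ x s ▸ subset_insert x (univ.image s))
      have hw : wt K n (univ.image s) = 0 := of_not_not fun hw => hs ⟨hsK, hw⟩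
      omega
    simp [hwx]

theorem lap_typeCochain_eq_smul [DecidableEq α]
    {K : Finset (Finset V)} {n : ℕ} {τ : V → α} {C : Finset α} (hK : IsDownClosed K)
    (hτ : IsBalancedColoring K n τ C) {m : ℕ} {g : (Fin (m + 1) → α) → ℝ} {r : ℝ}
    (hg : ∀ c, Injective c → univ.image c ⊆ C → typeLap C g c = r * g c) :
    lap K n (typeCochain K n τ g) = r • typeCochain K n τ g := by
  rw [lap_typeCochain hK hτ]
  funext s
  simp only [typeCochain, Pi.smul_apply, smul_eq_mul]
  split_ifs with hs
  · exact hg _ (hτ.injective_comp_of_wt_ne_zero hs.1 hs.2).1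
      (hτ.injective_comp_of_wt_ne_zero hs.1 hs.2).2
  · rw [mul_zero]

end TypeCochain

section Alternating

variable {α : Type*} {m : ℕ}

theorem IsAlternating.eq_zero_of_eq {g : (Fin m → α) → ℝ} (hg : IsAlternating g)
    {c : Fin m → α} {a b : Fin m} (hab : a ≠ b) (h : c a = c b) : g c = 0 := by
  have hswap : c ∘ Equiv.swap a b = c := by
    funext k
    rcases eq_or_ne k a with rfl | hka
    · simp [h]
    rcases eq_or_ne k b with rfl | hkb
    · simp [h]
    · simp [Equiv.swap_apply_of_ne_of_ne hka hkb]
  have := hg (Equiv.swap a b) c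
  rw [hswap, Equiv.Perm.sign_swap hab] at this
  push_cast at this
  linarith

theorem IsAlternating.apply_cons_removeNth {g : (Fin (m + 1) → α) → ℝ}
    (hg : IsAlternating g) (c : Fin (m + 1) → α) (j : Fin (m + 1)) :
    g (Fin.cons (c j) (j.removeNth c)) = (-1) ^ (j : ℕ) * g c := by
  rw [Fin.cons_removeNth_eq_comp_cycleRange_symm, hg, Equiv.Perm.sign_symm, Fin.sign_cycleRange]
  push_cast
  ring

theorem IsAlternating.typeLap_eq [DecidableEq α] {C : Finset α}
    {g : (Fin (m + 1) → α) → ℝ} (hg : IsAlternating g)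
    (hC : ∀ c' : Fin m → α, ∑ e ∈ C, g (Fin.cons e c') = 0) {c : Fin (m + 1) → α}
    (hc : Injective c) (hcC : univ.image c ⊆ C) : typeLap C g c = C.card * g c := by
  -- `∑_{C \ c} = ∑_C - ∑_c`, and in the sum over `c` only `e = c j` survives alternation
  have hmissing : ∀ j : Fin (m + 1), ∑ e ∈ C \ univ.image c,
      g (Fin.cons e (j.removeNth c)) = -((-1) ^ (j : ℕ) * g c) := by
    intro j
    rw [sum_sdiff_eq_sub hcC, hC, sum_image hc.injOn, sum_eq_single j,
      hg.apply_cons_removeNth]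
    · ring
    · intro k _ hkj
      obtain ⟨k', rfl⟩ := Fin.exists_succAbove_eq hkj
      exact hg.eq_zero_of_eq (a := 0) (b := k'.succ) (Fin.succ_ne_zero k').symm
        (by simp [Fin.removeNth_apply])
    · simp
  have hcard : (univ.image c).card = m + 1 := by
    rw [card_image_of_injective _ hc, card_univ, Fintype.card_fin]
  have hle : m + 1 ≤ C.card := hcard ▸ card_le_card hcC
  calc typeLap C g c
      = ∑ e ∈ C \ univ.image c, (g c + ∑ j : Fin (m + 1),
          (-1) ^ ((j : ℕ) + 1) * g (Fin.cons e (j.removeNth c))) := by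
        refine sum_congr rfl fun e _ => ?_
        rw [Fin.sum_univ_succ]
        simp
    _ = ((C.card - (m + 1) : ℕ) : ℝ) * g c + ∑ j : Fin (m + 1), (-1) ^ ((j : ℕ) + 1) *
          ∑ e ∈ C \ univ.image c, g (Fin.cons e (j.removeNth c)) := by
        rw [sum_add_distrib, sum_const, card_sdiff_of_subset hcC, hcard, nsmul_eq_mul, sum_comm]
        simp_rw [mul_sum]
    _ = C.card * g c := by
        simp_rw [hmissing]
        rw [Nat.cast_sub hle]
        simp [pow_succ, ← mul_assoc, ← pow_add, ← two_mul, pow_mul]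
        ring

end Alternating

section TypeDet

variable {m : ℕ}

noncomputable def colorRow (m : ℕ) (e : ℕ) : Fin (m + 2) → ℝ :=
  fun k => if e = k + 1 then 1 else 0

noncomputable def typeDet (m : ℕ) (c : Fin (m + 1) → ℕ) : ℝ :=
  Matrix.detRowAlternating (Fin.cons 1 (colorRow m ∘ c) : Fin (m + 2) → Fin (m + 2) → ℝ)

theorem typeDet_isAlternating : IsAlternating (typeDet m) := by
  intro σ c
  have hrows : (Fin.cons 1 ((colorRow m ∘ c) ∘ σ) : Fin (m + 2) → Fin (m + 2) → ℝ) =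
      Fin.cons 1 (colorRow m ∘ c) ∘ Equiv.Perm.decomposeFin.symm (0, σ) := by
    funext k
    refine Fin.cases ?_ (fun k => ?_) k <;> simp
  rw [typeDet, ← Function.comp_assoc, hrows, AlternatingMap.map_perm,
    Equiv.Perm.decomposeFin.symm_sign]
  simp [typeDet, Units.smul_def]

/-- Summing the second row over all colors reproduces the first row. -/
theorem typeDet_sum_cons {N : ℕ} (hN : m + 2 ≤ N) (c' : Fin m → ℕ) :
    ∑ e ∈ Icc 1 N, typeDet m (Fin.cons e c') = 0 := by
  set r : Fin (m + 2) → Fin (m + 2) → ℝ := Fin.cons 1 (Fin.cons 0 (colorRow m ∘ c'))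
  have hrow : ∀ x, (Fin.cons 1 (Fin.cons x (colorRow m ∘ c')) : Fin (m + 2) → _) =
      update r 1 x := by
    intro x
    rw [← Fin.succ_zero_eq_one, ← Fin.cons_update, Fin.update_cons_zero]
  have hsum : ∑ e ∈ Icc 1 N, colorRow m e = 1 := by
    funext k
    rw [Finset.sum_apply, Pi.one_apply]
    simp only [colorRow]
    rw [sum_ite_eq', if_pos (mem_Icc.mpr ⟨by omega, by omega⟩)]
  simp only [typeDet, Fin.comp_cons, hrow]
  rw [← AlternatingMap.map_update_sum, hsum]
  exact Matrix.detRowAlternating.map_eq_zero_of_eq _ (i := 0) (j := 1) (by simp [r]) (by simp)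

theorem typeDet_add_two : typeDet m (fun a => (a : ℕ) + 2) = 1 := by
  have htri : (Matrix.of (Fin.cons 1 (colorRow m ∘ fun a : Fin (m + 1) => (a : ℕ) + 2)) :
      Matrix (Fin (m + 2)) (Fin (m + 2)) ℝ).IsUpperTriangular := by
    intro i k hki
    refine Fin.cases (fun h => absurd h (Fin.not_lt_zero k)) (fun i h => ?_) i hki
    simp only [Matrix.of_apply, Fin.cons_succ, comp_apply, colorRow]
    rw [if_neg]
    have := Fin.lt_def.mp h
    simp at this
    omega
  refine (Matrix.det_of_isUpperTriangular htri).trans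
    (prod_eq_one fun i _ => Fin.cases (by simp) (fun i => by simp [colorRow]) i)

end TypeDet

theorem Module.Basis.finrank_flag {K W : Type*} [DivisionRing K] [AddCommGroup W] [Module K W]
    {n : ℕ} (b : Module.Basis (Fin n) K W) (k : Fin (n + 1)) : Module.finrank K (b.flag k) = k := by
  have := Module.Finite.of_basis b
  induction k using Fin.induction with
  | zero => simp
  | succ k ih =>
    rw [Module.Basis.flag_succ, sup_comm, Submodule.finrank_sup_span_singleton (by simp), ih,
      Fin.val_succ, Fin.val_castSucc]

section Building

variable (F : Type*) [Field F] [Fintype F] (ℓ : ℕ)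
  [Fintype (Submodule F (Fin (ℓ + 2) → F))] [DecidableEq (Submodule F (Fin (ℓ + 2) → F))]

theorem buildingK_isDownClosed : IsDownClosed (buildingK F ℓ) := by
  intro t ht s hst hs
  simp only [buildingK, mem_filter, mem_univ, true_and] at ht ⊢
  exact ⟨hs, fun W hW => ht.2.1 W (hst hW), fun W hW U hU => ht.2.2 W (hst hW) U (hst hU)⟩

theorem buildingK_isBalancedColoring :
    IsBalancedColoring (buildingK F ℓ) ℓ (fun W => Module.finrank F W) (Icc 1 (ℓ + 1)) := by
  intro t ht htc
  simp only [buildingK, mem_filter, mem_univ, true_and] at ht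
  obtain ⟨-, hproper, hchain⟩ := ht
  have hinj : Set.InjOn (fun W : Submodule F (Fin (ℓ + 2) → F) => Module.finrank F W) t := by
    intro W hW U hU h
    rcases hchain W hW U hU with hle | hle
    · exact Submodule.eq_of_le_of_finrank_le hle h.ge
    · exact (Submodule.eq_of_le_of_finrank_le hle h.le).symm
  refine ⟨hinj, eq_of_subset_of_card_le ?_ ?_⟩
  · intro e he
    obtain ⟨W, hW, rfl⟩ := mem_image.mp he
    have hpos : Module.finrank F W ≠ 0 := fun h0 =>
      (hproper W hW).1 (Submodule.finrank_eq_zero.mp h0)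
    have hlt := Submodule.finrank_lt (hproper W hW).2
    rw [Module.finrank_fin_fun] at hlt
    exact mem_Icc.mpr ⟨Nat.one_le_iff_ne_zero.mpr hpos, by omega⟩
  · rw [card_image_of_injOn hinj, htc, Nat.card_Icc]
    omega

theorem exists_allowed_finrank_eq_add_two {i : ℕ} (hi : i + 1 ≤ ℓ) :
    ∃ s : Fin (i + 1) → Submodule F (Fin (ℓ + 2) → F), Allowed (buildingK F ℓ) s ∧
      wt (buildingK F ℓ) ℓ (univ.image s) ≠ 0 ∧
      (fun W : Submodule F (Fin (ℓ + 2) → F) => Module.finrank F W) ∘ s =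
        fun a : Fin (i + 1) => (a : ℕ) + 2 := by
  set b := Pi.basisFun F (Fin (ℓ + 2))
  set U : Fin (ℓ + 1) → Submodule F (Fin (ℓ + 2) → F) := fun a => b.flag a.castSucc.succ
  have hU : ∀ a, Module.finrank F (U a) = (a : ℕ) + 1 := fun a => by simp [U, b.finrank_flag]
  have hUinj : Injective U :=
    b.flag_strictMono.injective.comp ((Fin.succ_injective _).comp (Fin.castSucc_injective _))
  have hT : univ.image U ∈ buildingK F ℓ := by
    simp only [buildingK, mem_filter, mem_univ, true_and, mem_image, forall_exists_index,
      forall_apply_eq_imp_iff, univ_nonempty.image, ne_eq]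
    refine ⟨fun a => ⟨fun h => ?_, fun h => ?_⟩, fun a a' => ?_⟩
    · have := hU a
      rw [h, finrank_bot] at this
      omega
    · have := hU a
      rw [h, finrank_top, Module.finrank_fin_fun] at this
      omega
    · rcases le_total a a' with h | h
      · exact Or.inl (b.flag_mono (by simpa using h))
      · exact Or.inr (b.flag_mono (by simpa using h))
  set s : Fin (i + 1) → Submodule F (Fin (ℓ + 2) → F) :=
    U ∘ fun a => ⟨a + 1, by omega⟩
  have hsT : univ.image s ⊆ univ.image U := image_univ_comp_subset U _
  refine ⟨s, ⟨hUinj.comp fun a a' h => by simpa [Fin.ext_iff] using h,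
    buildingK_isDownClosed F ℓ _ hT _ hsT (univ_nonempty.image _)⟩, ?_, ?_⟩
  · refine (card_pos.mpr ⟨univ.image U, mem_filter.mpr ⟨hT, hsT, ?_⟩⟩).ne'
    rw [card_image_of_injective _ hUinj, card_univ, Fintype.card_fin]
  · funext a
    simp [s, hU]

end Building

theorem building_top_eigenvalue_exists_general
    (F : Type*) [Field F] [Fintype F] (ℓ : ℕ)
    [Fintype (Submodule F (Fin (ℓ + 2) → F))]
    [DecidableEq (Submodule F (Fin (ℓ + 2) → F))]
    (i : ℕ) (hi : i + 1 ≤ ℓ) :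
    ∃ f : (Fin (i + 1) → Submodule F (Fin (ℓ + 2) → F)) → ℝ,
      f ≠ 0 ∧ IsCochain (buildingK F ℓ) (i + 1) f ∧
        lap (buildingK F ℓ) ℓ f = ((ℓ : ℝ) + 1) • f := by
  set τ := fun W : Submodule F (Fin (ℓ + 2) → F) => Module.finrank F W
  refine ⟨typeCochain (buildingK F ℓ) ℓ τ (typeDet i), ?_,
    typeCochain_isCochain _ _ _ typeDet_isAlternating, ?_⟩
  · obtain ⟨s, hs, hw, hτs⟩ := exists_allowed_finrank_eq_add_two F ℓ hi
    intro h0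
    have h1 := congr_fun h0 s
    rw [typeCochain_of_wt_ne_zero τ _ hs hw, hτs, typeDet_add_two] at h1
    exact one_ne_zero h1
  · refine lap_typeCochain_eq_smul (buildingK_isDownClosed F ℓ)
      (buildingK_isBalancedColoring F ℓ) fun c hc hcC => ?_
    rw [typeDet_isAlternating.typeLap_eq (typeDet_sum_cons (by omega)) hc hcC, Nat.card_Icc]
    push_cast
    ring

/-- for every finite field `F` (of prime power order `q`), `ℓ ≥ 1` and
`0 ≤ i ≤ ℓ-1`, the number `ℓ+1` is an eigenvalue of the Laplace operator `Δ` acting on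
`C^i(𝔅_{ℓ,q})`: there is a nonzero `f ∈ C^i(𝔅_{ℓ,q})` with `Δf = (ℓ+1)·f`. -/
theorem building_top_eigenvalue_exists
    (F : Type*) [Field F] [Fintype F] (ℓ : ℕ) (hℓ : 1 ≤ ℓ)
    [Fintype (Submodule F (Fin (ℓ + 2) → F))]
    [DecidableEq (Submodule F (Fin (ℓ + 2) → F))]
    (i : ℕ) (hi : i + 1 ≤ ℓ) :
    ∃ f : (Fin (i + 1) → Submodule F (Fin (ℓ + 2) → F)) → ℝ,
      f ≠ 0 ∧ IsCochain (buildingK F ℓ) (i + 1) f ∧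
        lap (buildingK F ℓ) ℓ f = ((ℓ : ℝ) + 1) • f :=
  building_top_eigenvalue_exists_general F ℓ i hi
end
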